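/- arXiv:1303.6472 — 2 statements merged into one kernel-verified Lean document; each statement's English description precedes it below -/
import Mathlib

section
/- Let f: ℤ_p → ℤ_p be compatible with van der Put coefficients B_m, and write b_{x_0} = B_{x_0} = f(x_0) for 0 ≤ x_0 ≤ p−1 and b_m = p^{−n} B_m for m = x̄ + p^n x_n with 0 ≤ x̄ < p^n and 1 ≤ x_n ≤ p−1. Then b_{x_0} ≡ φ_0(x_0) (mod p) for 0 ≤ x_0 ≤ p−1, and for m = x̄ + p^n x_n one has b_m = (f(x̄ + p^n x_n) − f(x̄))/p^n and b_m ≡ φ_n(x̄, x_n) − φ_n(x̄, 0) (mod p), where (x_0,…,x_{n−1}) are the base-p digits of x̄. -/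
open MeasureTheory Function

variable {p : ℕ} [hp : Fact p.Prime]

noncomputable instance : MeasurableSpace ℤ_[p] := borel _
instance : BorelSpace ℤ_[p] := ⟨rfl⟩

/-- The Haar measure on `ℤ_[p]`, normalized so that `μp p ℤ_[p] = 1`. -/
noncomputable def μp (p : ℕ) [Fact p.Prime] : Measure ℤ_[p] :=
  Measure.addHaarMeasure ⊤

/-- A function `f : ℤ_[p] → ℤ_[p]` is compatible if it is 1-Lipschitz w.r.t. `|·|_p`. -/
def Compatible (f : ℤ_[p] → ℤ_[p]) : Prop :=
  ∀ x y : ℤ_[p], ‖f x - f y‖ ≤ ‖x - y‖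

/-- The `k`-th base-`p` digit of `x ∈ ℤ_[p]`, as a natural number in `{0,…,p-1}`. -/
noncomputable def digitN (x : ℤ_[p]) (k : ℕ) : ℕ := x.appr (k + 1) / p ^ k

/-- The `k`-th base-`p` digit of `x ∈ ℤ_[p]`, as an element of `ZMod p`. -/
noncomputable def digit (x : ℤ_[p]) (k : ℕ) : ZMod p := (digitN x k : ZMod p)

/-- `f` has coordinate representation given by the family `φ`: the `k`-th digit of `f x`
is `φ k xb x_k`, where `xb = x mod p^k ∈ {0,…,p^k−1}` encodes the digits `(x_0,…,x_{k-1})`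
and `x_k` is the `k`-th digit of `x`. -/
def CoordRep (f : ℤ_[p] → ℤ_[p]) (φ : ℕ → ℕ → ZMod p → ZMod p) : Prop :=
  ∀ (x : ℤ_[p]) (k : ℕ), digit (f x) k = φ k (x.appr k) (digit x k)

/-- The reduction of `f` modulo `p^k`, acting on natural-number residues `{0,…,p^k−1}`
(for `k = k'+1` this is the map `f_{k'}` on `ℤ/p^k ℤ`). -/
noncomputable def red (f : ℤ_[p] → ℤ_[p]) (k : ℕ) (m : ℕ) : ℕ := (f (m : ℤ_[p])).appr k

/-- A map of `ZMod n` is transitive (a single-cycle permutation) iff every point can be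
reached from every point by iteration. -/
def IsTransitive {n : ℕ} (g : ZMod n → ZMod n) : Prop :=
  ∀ a b : ZMod n, ∃ s : ℕ, g^[s] a = b

/-- A self-map of the residues `{0,…,N−1}` is transitive (single cycle). -/
def TransitiveOn (g : ℕ → ℕ) (N : ℕ) : Prop :=
  ∀ a, a < N → ∀ b, b < N → ∃ s : ℕ, g^[s] a = b

/-- `compSeq ψ g xb n = ψ (g^[n-1] xb) ∘ ⋯ ∘ ψ (g xb) ∘ ψ xb`. -/
def compSeq (ψ : ℕ → ZMod p → ZMod p) (g : ℕ → ℕ) (xb : ℕ) : ℕ → ZMod p → ZMod p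
  | 0 => id
  | n + 1 => ψ (g^[n] xb) ∘ compSeq ψ g xb n

/-- The permutation `F_{k,xb} = φ_{k,f_{k-1}^{(p^k-1)}(xb)} ∘ ⋯ ∘ φ_{k,xb}` of `ZMod p`. -/
noncomputable def Fperm (φ : ℕ → ℕ → ZMod p → ZMod p) (f : ℤ_[p] → ℤ_[p]) (k xb : ℕ) :
    ZMod p → ZMod p :=
  compSeq (φ k) (red f k) xb (p ^ k)

/-- The van der Put characteristic function `χ(m,·)`: equals `1` iff
`|x − m|_p ≤ p^{−n}`, where `n = 1` for `m = 0` and `p^{n−1} ≤ m ≤ p^n − 1` otherwise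
(so `n = Nat.log p m + 1` in all cases). -/
noncomputable def chi (m : ℕ) (x : ℤ_[p]) : ℤ_[p] :=
  if x.appr (Nat.log p m + 1) = m then 1 else 0

section Helpers

lemma appr_unique (x : ℤ_[p]) (n a : ℕ) (ha : a < p ^ n)
    (h : x - (a : ℤ_[p]) ∈ Ideal.span {(p : ℤ_[p]) ^ n}) : x.appr n = a := by
  have h3 : ((x.appr n : ℕ) : ZMod (p ^ n)) = a :=
    PadicInt.zmod_congr_of_sub_mem_span n x _ _ (PadicInt.appr_spec n x) h
  rwa [ZMod.natCast_eq_natCast_iff', Nat.mod_eq_of_lt (PadicInt.appr_lt x n),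
    Nat.mod_eq_of_lt ha] at h3

lemma appr_natCast (N n : ℕ) : ((N : ℤ_[p])).appr n = N % p ^ n := by
  apply appr_unique
  · exact Nat.mod_lt _ (pow_pos hp.out.pos n)
  · rw [Ideal.mem_span_singleton]
    refine ⟨((N / p ^ n : ℕ) : ℤ_[p]), ?_⟩
    have hN : (N : ℤ_[p]) = (p : ℤ_[p]) ^ n * ((N / p ^ n : ℕ) : ℤ_[p]) + ((N % p ^ n : ℕ) : ℤ_[p]) := by
      exact_mod_cast congrArg (Nat.cast : ℕ → ℤ_[p]) (Nat.div_add_mod N (p ^ n)).symm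
    rw [hN]; ring

lemma appr_succ (x : ℤ_[p]) (n : ℕ) :
    x.appr (n + 1) = x.appr n + p ^ n * digitN x n := by
  obtain ⟨c, hc⟩ := PadicInt.dvd_appr_sub_appr x n (n + 1) (by omega : n ≤ n + 1)
  have hle := PadicInt.appr_mono x (by omega : n ≤ n + 1)
  have h1 : x.appr (n + 1) = p ^ n * c + x.appr n := by omega
  have h2 : digitN x n = c := by
    rw [digitN, h1, Nat.mul_add_div (pow_pos hp.out.pos n),
      Nat.div_eq_of_lt (PadicInt.appr_lt x n), Nat.add_zero]
  rw [h2]; omega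

lemma toZMod_eq_zero_of_mem {x : ℤ_[p]} (hx : x ∈ Ideal.span {(p : ℤ_[p])}) :
    PadicInt.toZMod x = 0 := by
  rw [← PadicInt.maximalIdeal_eq_span_p, ← PadicInt.ker_toZMod, RingHom.mem_ker] at hx
  exact hx

lemma toZMod_appr_one (x : ℤ_[p]) : PadicInt.toZMod x = ((x.appr 1 : ℕ) : ZMod p) := by
  have h := PadicInt.appr_spec 1 x
  rw [pow_one] at h
  have := toZMod_eq_zero_of_mem h
  rwa [map_sub, map_natCast, sub_eq_zero] at this

lemma toZMod_of_pow_mul (y z b : ℤ_[p]) (n : ℕ) (hyz : y - z = (p : ℤ_[p]) ^ n * b) :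
    PadicInt.toZMod b = digit y n - digit z n := by
  have hpn : ((p : ℤ_[p]) ^ n) ≠ 0 := pow_ne_zero _ (Nat.cast_ne_zero.mpr hp.out.ne_zero)
  have hyn : y.appr n = z.appr n := by
    apply appr_unique _ _ _ (PadicInt.appr_lt z n)
    have h1 : z - (z.appr n : ℤ_[p]) ∈ Ideal.span {(p : ℤ_[p]) ^ n} := PadicInt.appr_spec n z
    have h2 : y - z ∈ Ideal.span {(p : ℤ_[p]) ^ n} := by
      rw [Ideal.mem_span_singleton, hyz]; exact Dvd.intro b rfl
    have := Ideal.add_mem _ h2 h1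
    simpa [sub_add_sub_cancel] using this
  have hy1 := PadicInt.appr_spec (n + 1) y
  have hz1 := PadicInt.appr_spec (n + 1) z
  rw [appr_succ y n] at hy1
  rw [appr_succ z n, ← hyn] at hz1
  have hsub := Ideal.sub_mem _ hy1 hz1
  have hmem : (p : ℤ_[p]) ^ n * (b - ((digitN y n : ℤ_[p]) - (digitN z n : ℤ_[p])))
      ∈ Ideal.span {(p : ℤ_[p]) ^ (n + 1)} := by
    rw [mul_sub, ← hyz]
    convert hsub using 1
    push_cast
    ring
  rw [Ideal.mem_span_singleton, pow_succ] at hmem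
  have hdvd : (p : ℤ_[p]) ∣ b - ((digitN y n : ℤ_[p]) - (digitN z n : ℤ_[p])) :=
    (mul_dvd_mul_iff_left hpn).mp hmem
  have := toZMod_eq_zero_of_mem (Ideal.mem_span_singleton.mpr hdvd)
  rw [map_sub, map_sub, map_natCast, map_natCast, sub_eq_zero] at this
  rw [this]; rfl

end Helpers

/-- For a compatible `f` with van der Put coefficients `B_m`, the normalized coefficients
`b_m` satisfy: `b_{x_0} = B_{x_0} = f(x_0) ≡ φ_0(x_0) (mod p)` for `0 ≤ x_0 ≤ p−1`, and for
`m = x̄ + p^n x_n` (`0 ≤ x̄ < p^n`, `1 ≤ x_n ≤ p−1`), `b_m = (f(x̄ + p^n x_n) − f(x̄))/p^n`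
(with `B_m = p^n b_m`) and `b_m ≡ φ_n(x̄, x_n) − φ_n(x̄, 0) (mod p)`. -/
theorem vanDerPut_coefficients_of_coordinate
    (f : ℤ_[p] → ℤ_[p]) (φ : ℕ → ℕ → ZMod p → ZMod p) (B : ℕ → ℤ_[p])
    (hf : Compatible f) (hφ : CoordRep f φ)
    (hB : ∀ x : ℤ_[p], f x = ∑' m : ℕ, B m * chi m x) :
    (∀ x0 : ℕ, x0 < p →
      B x0 = f (x0 : ℤ_[p]) ∧ PadicInt.toZMod (B x0) = φ 0 0 (x0 : ZMod p)) ∧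
    (∀ n : ℕ, 1 ≤ n → ∀ xb : ℕ, xb < p ^ n → ∀ xn : ℕ, 1 ≤ xn → xn < p →
      ∃ b : ℤ_[p],
        B (xb + p ^ n * xn) = (p : ℤ_[p]) ^ n * b ∧
        (p : ℤ_[p]) ^ n * b = f ((xb + p ^ n * xn : ℕ) : ℤ_[p]) - f (xb : ℤ_[p]) ∧
        PadicInt.toZMod b = φ n xb (xn : ZMod p) - φ n xb 0) := by
  have ppos := hp.out.pos
  have hchiN : ∀ (k N : ℕ), chi k (N : ℤ_[p]) =
      if N % p ^ (Nat.log p k + 1) = k then 1 else 0 := by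
    intro k N
    rw [chi, appr_natCast]
  have hchi_zero : ∀ (k N : ℕ), N < k → chi k (N : ℤ_[p]) = (0 : ℤ_[p]) := by
    intro k N h
    rw [hchiN, if_neg]
    intro hEq
    have : N % p ^ (Nat.log p k + 1) ≤ N := Nat.mod_le _ _
    omega
  have hchi_self : ∀ N : ℕ, chi N (N : ℤ_[p]) = (1 : ℤ_[p]) := by
    intro N
    rw [hchiN, if_pos (Nat.mod_eq_of_lt (Nat.lt_pow_succ_log_self hp.out.one_lt N))]
  have hsum : ∀ N : ℕ, f (N : ℤ_[p]) = ∑ k ∈ Finset.range (N + 1), B k * chi k (N : ℤ_[p]) := by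
    intro N
    rw [hB]
    apply tsum_eq_sum
    intro k hk
    simp only [Finset.mem_range] at hk
    rw [hchi_zero k N (by omega), mul_zero]
  constructor
  · intro x0 hx0
    have hBx : B x0 = f (x0 : ℤ_[p]) := by
      rw [hsum x0,
        Finset.sum_eq_single_of_mem x0 (Finset.mem_range.mpr (Nat.lt_succ_self x0))]
      · rw [hchi_self, mul_one]
      · intro k hk hne
        rw [hchiN, if_neg, mul_zero]
        intro hEq
        apply hne
        rw [← hEq, Nat.mod_eq_of_lt
          (lt_of_lt_of_le hx0 (Nat.le_self_pow (Nat.succ_ne_zero _) p))]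
    refine ⟨hBx, ?_⟩
    rw [hBx]
    have hc := hφ (x0 : ℤ_[p]) 0
    have h0 : ((x0 : ℤ_[p])).appr 0 = 0 := by rw [appr_natCast, pow_zero, Nat.mod_one]
    have hd : digit ((x0 : ℕ) : ℤ_[p]) 0 = (x0 : ZMod p) := by
      rw [digit, digitN, appr_natCast, pow_one, pow_zero, Nat.div_one,
        Nat.mod_eq_of_lt hx0]
    have htz : PadicInt.toZMod (f (x0 : ℤ_[p])) = digit (f (x0 : ℤ_[p])) 0 := by
      rw [toZMod_appr_one, digit, digitN, pow_zero, Nat.div_one]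
    rw [htz, hc, h0, hd]
  · intro n hn xb hxb xn hxn1 hxnp
    set m := xb + p ^ n * xn with hm
    have hpn : (0 : ℕ) < p ^ n := pow_pos ppos n
    have hm1 : p ^ n ≤ m := by
      have : p ^ n * 1 ≤ p ^ n * xn := Nat.mul_le_mul_left _ (by omega)
      omega
    have hm2 : m < p ^ (n + 1) := by
      have h1 : p ^ n * xn ≤ p ^ n * (p - 1) := Nat.mul_le_mul_left _ (by omega)
      have hp1 : 1 + (p - 1) = p := by have := hp.out.two_le; omega
      have h2 : p ^ n + p ^ n * (p - 1) = p ^ (n + 1) := by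
        calc p ^ n + p ^ n * (p - 1) = p ^ n * (1 + (p - 1)) := by ring
          _ = p ^ n * p := by rw [hp1]
          _ = p ^ (n + 1) := (pow_succ p n).symm
      omega
    have hxbm : xb < m := lt_of_lt_of_le hxb hm1
    have hnorm : ‖f ((m : ℕ) : ℤ_[p]) - f ((xb : ℕ) : ℤ_[p])‖ ≤ (p : ℝ) ^ (-(n : ℤ)) := by
      refine le_trans (hf _ _) ?_
      have hcast : ((m : ℕ) : ℤ_[p]) - ((xb : ℕ) : ℤ_[p]) = (p : ℤ_[p]) ^ n * (xn : ℤ_[p]) := by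
        rw [hm]; push_cast; ring
      rw [hcast, norm_mul, PadicInt.norm_p_pow]
      have h1 : ‖((xn : ℕ) : ℤ_[p])‖ ≤ 1 := PadicInt.norm_le_one _
      have h2 : (0 : ℝ) ≤ (p : ℝ) ^ (-(n : ℤ)) := zpow_nonneg (by positivity) _
      calc (p : ℝ) ^ (-(n : ℤ)) * ‖((xn : ℕ) : ℤ_[p])‖ ≤ (p : ℝ) ^ (-(n : ℤ)) * 1 :=
            mul_le_mul_of_nonneg_left h1 h2
        _ = (p : ℝ) ^ (-(n : ℤ)) := mul_one _
    have hmem := (PadicInt.norm_le_pow_iff_mem_span_pow _ n).mp hnorm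
    rw [Ideal.mem_span_singleton] at hmem
    obtain ⟨b, hb⟩ := hmem
    have hext : f ((xb : ℕ) : ℤ_[p]) = ∑ k ∈ Finset.range (m + 1), B k * chi k ((xb : ℕ) : ℤ_[p]) := by
      rw [hsum xb]
      apply Finset.sum_subset
      · intro k hk
        simp only [Finset.mem_range] at *
        omega
      · intro k _ hk
        simp only [Finset.mem_range] at hk
        rw [hchi_zero k xb (by omega), mul_zero]
    have hBm : B m = f ((m : ℕ) : ℤ_[p]) - f ((xb : ℕ) : ℤ_[p]) := by
      rw [hsum m, hext, ← Finset.sum_sub_distrib,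
        Finset.sum_eq_single_of_mem m (Finset.mem_range.mpr (Nat.lt_succ_self m))]
      · rw [hchi_self, hchi_zero m xb hxbm, mul_one, mul_zero, sub_zero]
      · intro k hk hne
        have hchieq : chi k ((m : ℕ) : ℤ_[p]) = chi k ((xb : ℕ) : ℤ_[p]) := by
          rw [hchiN, hchiN]
          set j := Nat.log p k + 1 with hj
          rcases le_or_gt j n with hjn | hjn
          · have hsplit : p ^ n * xn = p ^ j * (p ^ (n - j) * xn) := by
              rw [← mul_assoc, ← pow_add, Nat.add_sub_cancel' hjn]
            have hmod : m % p ^ j = xb % p ^ j := by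
              rw [hm, hsplit, Nat.add_mul_mod_self_left]
            rw [hmod]
          · rw [if_neg, if_neg]
            · intro hEq
              have hxx : xb % p ^ j = xb := Nat.mod_eq_of_lt
                (lt_of_lt_of_le hxb (Nat.pow_le_pow_right ppos (le_of_lt hjn)))
              have hkxb : k = xb := by omega
              subst hkxb
              have hlt : Nat.log p k < n := by
                rcases Nat.eq_zero_or_pos k with h0 | h0
                · rw [h0, Nat.log_zero_right]; omega
                · exact Nat.log_lt_of_lt_pow (by omega) hxb
              omega
            · intro hEq
              have hmm : m % p ^ j = m := Nat.mod_eq_of_lt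
                (lt_of_lt_of_le hm2 (Nat.pow_le_pow_right ppos (by omega)))
              exact hne (by omega)
        rw [hchieq, sub_self]
    refine ⟨b, hBm.trans hb, hb.symm, ?_⟩
    have hkey := toZMod_of_pow_mul (f ((m : ℕ) : ℤ_[p])) (f ((xb : ℕ) : ℤ_[p])) b n hb
    have h1 := hφ ((m : ℕ) : ℤ_[p]) n
    have h2 := hφ ((xb : ℕ) : ℤ_[p]) n
    have ham : (((m : ℕ) : ℤ_[p])).appr n = xb := by
      rw [appr_natCast, hm, Nat.add_mul_mod_self_left, Nat.mod_eq_of_lt hxb]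
    have hdm : digit ((m : ℕ) : ℤ_[p]) n = (xn : ZMod p) := by
      rw [digit, digitN, appr_natCast, Nat.mod_eq_of_lt hm2, hm,
        Nat.add_mul_div_left _ _ hpn, Nat.div_eq_of_lt hxb]
      simp
    have haxb : (((xb : ℕ) : ℤ_[p])).appr n = xb := by
      rw [appr_natCast, Nat.mod_eq_of_lt hxb]
    have hdxb : digit ((xb : ℕ) : ℤ_[p]) n = 0 := by
      rw [digit, digitN, appr_natCast,
        Nat.mod_eq_of_lt (lt_of_lt_of_le hxb (Nat.pow_le_pow_right ppos (Nat.le_succ n))),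
        Nat.div_eq_of_lt hxb]
      simp
    rw [hkey, h1, h2, ham, hdm, haxb, hdxb]
end

section
/- Let p be an odd prime, c ∈ ℤ_p, and h: ℤ_p → ℤ_p a compatible function, and define f: ℤ_p → ℤ_p by f(x) = c + x + p·(h(x+1) − h(x)). If c ≢ 0 (mod p), then f is ergodic with respect to μ_p. -/
open MeasureTheory Function

variable {p : ℕ} [hp : Fact p.Prime]

/-!
The map `f x = c + x + p * (h (x + 1) - h x)` is an isometry of `ℤ_[p]`: as `h` is 1-Lipschitz,
the factor `p` makes the perturbation strictly contracting. An isometry permutes the residue classes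
modulo each `p ^ n`, which all carry Haar measure `p ^ (-n)`, so it preserves Haar measure; if it
permutes them cyclically for every `n`, an invariant set meets all classes of a level in equal
measure, so its restriction of Haar measure is a multiple of Haar measure and its measure is `0`
or `1`.

Cyclicity is proved by induction on `n`. Over a full cycle modulo `p ^ n` the increments
`h (y + 1) - h y` telescope to `0` modulo `p ^ n`, so `f^[p ^ n] x ≡ x + p ^ n * c` modulo
`p ^ (n + 1)`; as `c` is a unit, the `p` lifts of a residue modulo `p ^ n` are visited in turn.
-/

open PadicInt
open scoped ENNReal

namespace PadicInt

theorem toZModPow_eq_iff_dvd {n : ℕ} {x y : ℤ_[p]} :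
    toZModPow n x = toZModPow n y ↔ (p : ℤ_[p]) ^ n ∣ x - y := by
  rw [← sub_eq_zero, ← map_sub, ← RingHom.mem_ker, ker_toZModPow, Ideal.mem_span_singleton]

theorem toZModPow_eq_iff_norm_sub_le {n : ℕ} {x y : ℤ_[p]} :
    toZModPow n x = toZModPow n y ↔ ‖x - y‖ ≤ (p : ℝ) ^ (-n : ℤ) := by
  rw [norm_le_pow_iff_mem_span_pow, ← ker_toZModPow, RingHom.mem_ker, map_sub, sub_eq_zero]

theorem toZModPow_natCast_val {n : ℕ} (a : ZMod (p ^ n)) : toZModPow n (a.val : ℤ_[p]) = a := by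
  rw [map_natCast, ZMod.natCast_zmod_val]

theorem toZModPow_surjective (n : ℕ) : Surjective (toZModPow (p := p) n) :=
  fun a => ⟨a.val, toZModPow_natCast_val a⟩

theorem exists_lt_toZModPow_add_mul_eq {n : ℕ} {c y z : ℤ_[p]} (hc : ¬ (p : ℤ_[p]) ∣ c)
    (hzy : toZModPow n z = toZModPow n y) :
    ∃ j : ℕ, j < p ∧
      toZModPow (n + 1) (z + (j : ℤ_[p]) * (p : ℤ_[p]) ^ n * c) = toZModPow (n + 1) y := by
  obtain ⟨u, hu⟩ := toZModPow_eq_iff_dvd.mp hzy.symm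
  have hc₀ : toZMod c ≠ 0 := by
    rwa [Ne, ← RingHom.mem_ker, ker_toZMod, maximalIdeal_eq_span_p, Ideal.mem_span_singleton]
  set j := (toZMod u / toZMod c).val
  have hj : (p : ℤ_[p]) ∣ u - j * c := by
    rw [← Ideal.mem_span_singleton, ← maximalIdeal_eq_span_p, ← ker_toZMod, RingHom.mem_ker,
      map_sub, map_mul, map_natCast, ZMod.natCast_zmod_val, div_mul_cancel₀ _ hc₀, sub_self]
  obtain ⟨v, hv⟩ := hj
  refine ⟨j, ZMod.val_lt _, toZModPow_eq_iff_dvd.mpr ⟨-v, ?_⟩⟩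
  linear_combination -hu - (p : ℤ_[p]) ^ n * hv

def residueClass (n : ℕ) (a : ZMod (p ^ n)) : Set ℤ_[p] := toZModPow n ⁻¹' {a}

theorem residueClass_toZModPow (n : ℕ) (x : ℤ_[p]) :
    residueClass n (toZModPow n x) = Metric.closedBall x ((p : ℝ) ^ (-n : ℤ)) := by
  ext y
  rw [Metric.mem_closedBall, dist_eq_norm, ← toZModPow_eq_iff_norm_sub_le]
  rfl

theorem measurableSet_residueClass (n : ℕ) (a : ZMod (p ^ n)) :
    MeasurableSet (residueClass n a) := by
  obtain ⟨x, rfl⟩ := toZModPow_surjective n a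
  rw [residueClass_toZModPow]
  exact Metric.isClosed_closedBall.measurableSet

variable (p) in
def residueClasses : Set (Set ℤ_[p]) := ⋃ n, Set.range (residueClass n)

theorem isTopologicalBasis_residueClasses :
    TopologicalSpace.IsTopologicalBasis (residueClasses p) := by
  have hp₀ : (0 : ℝ) < p := by exact_mod_cast hp.out.pos
  refine TopologicalSpace.isTopologicalBasis_of_isOpen_of_nhds ?_ fun x U hxU hU => ?_
  · rintro _ ⟨_, ⟨n, rfl⟩, a, rfl⟩
    obtain ⟨x, rfl⟩ := toZModPow_surjective n a
    rw [residueClass_toZModPow]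
    exact IsUltrametricDist.isOpen_closedBall x (zpow_pos hp₀ _).ne'
  · have hp₁ : (p : ℝ)⁻¹ < 1 := inv_lt_one_of_one_lt₀ (by exact_mod_cast hp.out.one_lt)
    obtain ⟨n, -, hn⟩ :=
      (Metric.nhds_basis_closedBall_pow (x := x) (inv_pos.mpr hp₀) hp₁).mem_iff.mp
        (hU.mem_nhds hxU)
    refine ⟨residueClass n (toZModPow n x), Set.mem_iUnion.mpr ⟨n, _, rfl⟩, rfl, ?_⟩
    rwa [residueClass_toZModPow, zpow_neg, zpow_natCast, ← inv_pow]

theorem isPiSystem_residueClasses : IsPiSystem (residueClasses p) := by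
  have hsubset : ∀ {m n : ℕ} (x : ℤ_[p]), m ≤ n →
      residueClass n (toZModPow n x) ⊆ residueClass m (toZModPow m x) := by
    intro m n x hmn
    rw [residueClass_toZModPow, residueClass_toZModPow]
    exact Metric.closedBall_subset_closedBall
      (zpow_le_zpow_right₀ (by exact_mod_cast hp.out.one_le) (by omega))
  rintro _ ⟨_, ⟨m, rfl⟩, a, rfl⟩ _ ⟨_, ⟨n, rfl⟩, b, rfl⟩ ⟨x, rfl, rfl⟩
  rcases le_total m n with hmn | hnm
  · rw [Set.inter_eq_right.mpr (hsubset x hmn)]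
    exact Set.mem_iUnion.mpr ⟨n, _, rfl⟩
  · rw [Set.inter_eq_left.mpr (hsubset x hnm)]
    exact Set.mem_iUnion.mpr ⟨m, _, rfl⟩

theorem borel_eq_generateFrom_residueClasses :
    (inferInstance : MeasurableSpace ℤ_[p]) = MeasurableSpace.generateFrom (residueClasses p) :=
  isTopologicalBasis_residueClasses.borel_eq_generateFrom

end PadicInt

section HaarMeasure

instance : IsProbabilityMeasure (μp p) :=
  ⟨by simpa [μp] using
    Measure.addHaarMeasure_self (K₀ := (⊤ : TopologicalSpace.PositiveCompacts ℤ_[p]))⟩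

instance : (μp p).IsAddLeftInvariant := by unfold μp; infer_instance

theorem sum_measure_residueClass (ν : Measure ℤ_[p]) (n : ℕ) :
    ∑ a : ZMod (p ^ n), ν (residueClass n a) = ν Set.univ := by
  have := sum_measure_preimage_singleton (μ := ν) Finset.univ
    fun a _ => measurableSet_residueClass n a
  rwa [Finset.coe_univ, Set.preimage_univ] at this

theorem measure_residueClass_of_forall_eq {ν : Measure ℤ_[p]} {n : ℕ}
    (hν : ∀ a b : ZMod (p ^ n), ν (residueClass n a) = ν (residueClass n b))
    (a : ZMod (p ^ n)) :
    ν (residueClass n a) = ν Set.univ / (p : ℝ≥0∞) ^ n := by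
  rw [ENNReal.eq_div_iff (pow_ne_zero _ (by exact_mod_cast hp.out.ne_zero))
      (ENNReal.pow_ne_top (ENNReal.natCast_ne_top p)),
    ← sum_measure_residueClass, Finset.sum_congr rfl fun b _ => hν b a, Finset.sum_const,
    Finset.card_univ, ZMod.card, nsmul_eq_mul, Nat.cast_pow]

theorem μp_residueClass_eq (n : ℕ) (a b : ZMod (p ^ n)) :
    μp p (residueClass n a) = μp p (residueClass n b) := by
  obtain ⟨x, rfl⟩ := toZModPow_surjective n a
  obtain ⟨y, rfl⟩ := toZModPow_surjective n b
  have htranslate : residueClass n (toZModPow n x) =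
      (fun z => y - x + z) ⁻¹' residueClass n (toZModPow n y) := by
    ext z
    simp only [residueClass, Set.mem_preimage, Set.mem_singleton_iff, map_add, map_sub]
    constructor <;> intro hz <;> linear_combination hz
  rw [htranslate, measure_preimage_add]

theorem eq_smul_μp_of_measure_residueClass_eq (ν : Measure ℤ_[p]) [IsFiniteMeasure ν]
    (hν : ∀ n (a b : ZMod (p ^ n)), ν (residueClass n a) = ν (residueClass n b)) :
    ν = ν Set.univ • μp p := by
  refine ext_of_generate_finite _ borel_eq_generateFrom_residueClasses isPiSystem_residueClasses
    ?_ (by simp)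
  rintro _ ⟨_, ⟨n, rfl⟩, a, rfl⟩
  rw [Measure.smul_apply, smul_eq_mul, measure_residueClass_of_forall_eq (hν n),
    measure_residueClass_of_forall_eq (μp_residueClass_eq n), measure_univ (μ := μp p)]
  exact (mul_one_div _ _).symm

end HaarMeasure

namespace Isometry

protected theorem iterate {α : Type*} [PseudoEMetricSpace α] {f : α → α} (hf : Isometry f)
    (m : ℕ) : Isometry f^[m] := by
  induction m with
  | zero => exact isometry_id
  | succ m ih => rw [iterate_succ']; exact hf.comp ih

variable {f : ℤ_[p] → ℤ_[p]}

theorem toZModPow_eq_iff (hf : Isometry f) {n : ℕ} {x y : ℤ_[p]} :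
    toZModPow n (f x) = toZModPow n (f y) ↔ toZModPow n x = toZModPow n y := by
  rw [toZModPow_eq_iff_norm_sub_le, toZModPow_eq_iff_norm_sub_le, ← dist_eq_norm,
    ← dist_eq_norm, hf.dist_eq]

theorem preimage_residueClass (hf : Isometry f) (n : ℕ) (x : ℤ_[p]) :
    f ⁻¹' residueClass n (toZModPow n (f x)) = residueClass n (toZModPow n x) :=
  Set.ext fun _ => hf.toZModPow_eq_iff

theorem surjective_toZModPow_comp (hf : Isometry f) (n : ℕ) : Surjective (toZModPow n ∘ f) := by
  have hinj : Injective fun a : ZMod (p ^ n) => toZModPow n (f a.val) := fun a b hab => by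
    simpa only [toZModPow_natCast_val] using hf.toZModPow_eq_iff.mp hab
  intro b
  obtain ⟨a, rfl⟩ := Finite.surjective_of_injective hinj b
  exact ⟨_, rfl⟩


theorem measurePreserving_μp (hf : Isometry f) : MeasurePreserving f (μp p) (μp p) := by
  have hmeas : Measurable f := hf.continuous.measurable
  have huniform : ∀ n (a b : ZMod (p ^ n)),
      (μp p).map f (residueClass n a) = (μp p).map f (residueClass n b) := by
    intro n a b
    obtain ⟨x, rfl⟩ := hf.surjective_toZModPow_comp n a
    obtain ⟨y, rfl⟩ := hf.surjective_toZModPow_comp n b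
    simp only [comp_apply, Measure.map_apply hmeas (measurableSet_residueClass _ _),
      hf.preimage_residueClass]
    exact μp_residueClass_eq n _ _
  refine ⟨hmeas, ?_⟩
  rw [eq_smul_μp_of_measure_residueClass_eq _ huniform, Measure.map_apply hmeas .univ,
    Set.preimage_univ, measure_univ, one_smul]

theorem ergodic_μp_of_forall_exists_iterate (hf : Isometry f)
    (htrans : ∀ n (x y : ℤ_[p]), ∃ m, toZModPow n (f^[m] x) = toZModPow n y) :
    Ergodic f (μp p) := by
  have hmp := hf.measurePreserving_μp
  refine ⟨hmp, ⟨fun s hs hfs => ?_⟩⟩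
  have huniform : ∀ n (a b : ZMod (p ^ n)),
      (μp p).restrict s (residueClass n a) = (μp p).restrict s (residueClass n b) := by
    intro n a b
    obtain ⟨x, rfl⟩ := toZModPow_surjective n a
    obtain ⟨y, rfl⟩ := toZModPow_surjective n b
    obtain ⟨m, hm⟩ := htrans n x y
    have hs_m : f^[m] ⁻¹' s = s := by rw [Set.preimage_iterate_eq]; exact iterate_fixed hfs m
    rw [Measure.restrict_apply (measurableSet_residueClass _ _),
      Measure.restrict_apply (measurableSet_residueClass _ _), ← hm]
    conv_lhs => rw [← (hf.iterate m).preimage_residueClass, ← hs_m, ← Set.preimage_inter]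
    exact (hmp.iterate m).measure_preimage
      ((measurableSet_residueClass _ _).inter hs).nullMeasurableSet
  have hidem : μp p s = μp p s * μp p s := by
    conv_lhs => rw [← Measure.restrict_apply_self,
      eq_smul_μp_of_measure_residueClass_eq _ huniform]
    rw [Measure.restrict_apply_univ, Measure.smul_apply, smul_eq_mul]
  rw [Filter.eventuallyConst_set', ae_eq_empty, ae_eq_univ, prob_compl_eq_zero_iff hs]
  by_contra! hne
  exact hne.2 ((ENNReal.mul_eq_left hne.1 (measure_ne_top _ s)).mp hidem.symm)

end Isometry

namespace Compatible

variable {h : ℤ_[p] → ℤ_[p]}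

theorem toZModPow_eq (hh : Compatible h) {n : ℕ} {x y : ℤ_[p]}
    (hxy : toZModPow n x = toZModPow n y) : toZModPow n (h x) = toZModPow n (h y) := by
  rw [toZModPow_eq_iff_norm_sub_le] at hxy ⊢
  exact (hh x y).trans hxy

theorem pow_dvd_sum_sub (hh : Compatible h) {n : ℕ} {y : ℕ → ℤ_[p]}
    (hy : Surjective fun i : Fin (p ^ n) => toZModPow n (y i)) :
    (p : ℤ_[p]) ^ n ∣ ∑ i ∈ Finset.range (p ^ n), (h (y i + 1) - h (y i)) := by
  set ψ : ZMod (p ^ n) → ZMod (p ^ n) := fun a => toZModPow n (h a.val)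
  have hψ : ∀ x, toZModPow n (h x) = ψ (toZModPow n x) := fun x =>
    hh.toZModPow_eq (toZModPow_natCast_val _).symm
  have hbij : Bijective fun i : Fin (p ^ n) => toZModPow n (y i) :=
    (Fintype.bijective_iff_surjective_and_card _).mpr ⟨hy, by simp⟩
  rw [← sub_zero (∑ i ∈ _, _), ← toZModPow_eq_iff_dvd, map_zero, map_sum]
  simp only [map_sub, hψ, map_add, map_one]
  rw [Finset.sum_range fun i => ψ (toZModPow n (y i) + 1) - ψ (toZModPow n (y i)),
    Fintype.sum_bijective _ hbij _ (fun a => ψ (a + 1) - ψ a) fun _ => rfl,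
    Finset.sum_sub_distrib,
    Fintype.sum_equiv (Equiv.addRight 1) (fun a => ψ (a + 1)) ψ fun _ => rfl, sub_self]

end Compatible

noncomputable def perturbedTranslation (c : ℤ_[p]) (h : ℤ_[p] → ℤ_[p]) (x : ℤ_[p]) :
    ℤ_[p] :=
  c + x + p * (h (x + 1) - h x)

section PerturbedTranslation

variable {c : ℤ_[p]} {h : ℤ_[p] → ℤ_[p]}

theorem isometry_perturbedTranslation (c : ℤ_[p]) (hh : Compatible h) :
    Isometry (perturbedTranslation c h) := by
  refine Isometry.of_dist_eq fun x y => ?_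
  rw [dist_eq_norm, dist_eq_norm]
  rcases eq_or_ne x y with rfl | hxy
  · simp
  set d := (h (x + 1) - h (y + 1)) + (h y - h x)
  have hd : ‖d‖ ≤ ‖x - y‖ := by
    refine (nonarchimedean _ _).trans (max_le ?_ ?_)
    · simpa using hh (x + 1) (y + 1)
    · rw [norm_sub_rev x y]
      exact hh y x
  have hpd : ‖(p : ℤ_[p]) * d‖ < ‖x - y‖ := by
    have hp₁ : (p : ℝ)⁻¹ < 1 := inv_lt_one_of_one_lt₀ (by exact_mod_cast hp.out.one_lt)
    rw [norm_mul, norm_p]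
    calc (p : ℝ)⁻¹ * ‖d‖ ≤ (p : ℝ)⁻¹ * ‖x - y‖ := by gcongr
      _ < ‖x - y‖ := mul_lt_of_lt_one_left (norm_pos_iff.mpr (sub_ne_zero.mpr hxy)) hp₁
  calc ‖perturbedTranslation c h x - perturbedTranslation c h y‖ = ‖x - y + p * d‖ := by
        congr 1
        simp only [perturbedTranslation, d]
        ring
    _ = ‖x - y‖ := by rw [norm_add_eq_max_of_ne hpd.ne', max_eq_left hpd.le]

theorem perturbedTranslation_iterate (m : ℕ) (x : ℤ_[p]) :
    (perturbedTranslation c h)^[m] x = x + m * c + p * ∑ i ∈ Finset.range m,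
      (h ((perturbedTranslation c h)^[i] x + 1) - h ((perturbedTranslation c h)^[i] x)) := by
  induction m with
  | zero => simp
  | succ m ih =>
    rw [iterate_succ_apply', perturbedTranslation, Finset.sum_range_succ]
    push_cast
    linear_combination ih

theorem toZModPow_perturbedTranslation_iterate_pow (hh : Compatible h) {n : ℕ} {x : ℤ_[p]}
    (hx : ∀ y, ∃ i < p ^ n, toZModPow n ((perturbedTranslation c h)^[i] x) = toZModPow n y) :
    toZModPow (n + 1) ((perturbedTranslation c h)^[p ^ n] x) =
      toZModPow (n + 1) (x + (p : ℤ_[p]) ^ n * c) := by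
  have hsurj : Surjective fun i : Fin (p ^ n) =>
      toZModPow n ((perturbedTranslation c h)^[i] x) := fun a => by
    obtain ⟨y, rfl⟩ := toZModPow_surjective n a
    obtain ⟨i, hi, hiy⟩ := hx y
    exact ⟨⟨i, hi⟩, hiy⟩
  obtain ⟨S, hS⟩ := hh.pow_dvd_sum_sub (y := fun i => (perturbedTranslation c h)^[i] x) hsurj
  rw [toZModPow_eq_iff_dvd, perturbedTranslation_iterate, hS]
  exact ⟨S, by push_cast; ring⟩

theorem toZModPow_perturbedTranslation_iterate_mul_pow (hh : Compatible h) {n : ℕ}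
    (htrans : ∀ x y, ∃ i < p ^ n,
      toZModPow n ((perturbedTranslation c h)^[i] x) = toZModPow n y) (j : ℕ) (x : ℤ_[p]) :
    toZModPow (n + 1) ((perturbedTranslation c h)^[j * p ^ n] x) =
      toZModPow (n + 1) (x + (j : ℤ_[p]) * (p : ℤ_[p]) ^ n * c) := by
  induction j generalizing x with
  | zero => simp
  | succ j ih =>
    rw [add_one_mul, iterate_add_apply, ih, map_add,
      toZModPow_perturbedTranslation_iterate_pow hh (htrans _), ← map_add]
    congr 1
    push_cast
    ring

theorem exists_perturbedTranslation_iterate_lt_pow (hh : Compatible h)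
    (hc : ¬ (p : ℤ_[p]) ∣ c) (n : ℕ) (x y : ℤ_[p]) :
    ∃ i < p ^ n, toZModPow n ((perturbedTranslation c h)^[i] x) = toZModPow n y := by
  induction n generalizing x y with
  | zero => exact ⟨0, by simp, by rw [toZModPow_eq_iff_dvd, pow_zero]; exact one_dvd _⟩
  | succ n ih =>
    obtain ⟨i, hi, hiy⟩ := ih x y
    obtain ⟨j, hj, hjy⟩ := exists_lt_toZModPow_add_mul_eq hc hiy
    have hlt : j * p ^ n + i < p ^ (n + 1) := calc
      j * p ^ n + i < (j + 1) * p ^ n := by rw [add_one_mul]; exact Nat.add_lt_add_left hi _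
      _ ≤ p ^ (n + 1) := by rw [pow_succ']; exact Nat.mul_le_mul_right _ hj
    refine ⟨j * p ^ n + i, hlt, ?_⟩
    rw [iterate_add_apply, toZModPow_perturbedTranslation_iterate_mul_pow hh ih, hjy]

end PerturbedTranslation

theorem ergodic_of_add_discrete_derivative_general
    (c : ℤ_[p]) (h : ℤ_[p] → ℤ_[p]) (hh : Compatible h)
    (hc : ¬ (p : ℤ_[p]) ∣ c) :
    Ergodic (fun x => c + x + (p : ℤ_[p]) * (h (x + 1) - h x)) (μp p) :=
  (isometry_perturbedTranslation c hh).ergodic_μp_of_forall_exists_iterate fun n x y =>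
    (exists_perturbedTranslation_iterate_lt_pow hh hc n x y).imp fun _ => And.right

/-- For odd `p`, `c ∈ ℤ_[p]` with `c ≢ 0 (mod p)`, and compatible `h`, the function
`f(x) = c + x + p·(h(x+1) − h(x))` is ergodic w.r.t. `μp p`. -/
theorem ergodic_of_add_discrete_derivative
    (hp2 : p ≠ 2) (c : ℤ_[p]) (h : ℤ_[p] → ℤ_[p]) (hh : Compatible h)
    (hc : ¬ (p : ℤ_[p]) ∣ c) :
    Ergodic (fun x => c + x + (p : ℤ_[p]) * (h (x + 1) - h x)) (μp p) :=
  ergodic_of_add_discrete_derivative_general c h hh hc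
end
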